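/- arXiv:1201.4465 — 8 statements merged into one kernel-verified Lean document; each statement's English description precedes it below -/
import Mathlib

section
/- For every R ≥ 0 and every α ∈ (-1, 1] there exists a constant C (depending only on R and α) such that for all integers n, j with n ≥ max(2R, 1) and 1 ≤ j ≤ n one has j · | ∫₀^∞ (1 − (t n / j)^α) · e^{R t} · (n^j / (j−1)!) · t^{j−1} · e^{−n t} dt | ≤ C. (This is the verification that the exponential measures dμ_n(t) = n e^{−nt} dt, whose j-fold convolutions are the Gamma densities t ↦ (n^j/(j−1)!) t^{j−1} e^{−nt}, satisfy condition (M3), which underlies the convergence analysis of the implicit Euler scheme.) -/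
/-!
Since `e^{Rt} e^{-nt} = e^{-(n-R)t}`, the integral is an explicit Gamma integral: with
`q = n / (n - R)` it equals `q^j (1 - q^α Γ(j+α) / (Γ(j) j^α))`. The bound `j (q - 1) ≤ 2R`
gives `q^j ≤ e^{2R}` and `j |1 - q^α| ≤ 2R`, and Wendel's inequality (a consequence of the
log-convexity of `Γ`) gives `|1 - Γ(j+α) / (Γ(j) j^α)| = O(1/j)`.
-/

open Real Set MeasureTheory
open scoped Nat

namespace Real

theorem Gamma_add_le_Gamma_mul_rpow {x δ : ℝ} (hx : 0 < x) (hδ₀ : 0 ≤ δ) (hδ₁ : δ ≤ 1) :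
    Gamma (x + δ) ≤ Gamma x * x ^ δ := by
  rcases hδ₀.eq_or_lt with rfl | hδ₀
  · simp
  rcases hδ₁.eq_or_lt with rfl | hδ₁
  · rw [Gamma_add_one hx.ne', rpow_one, mul_comm]
  have hΓ := Gamma_pos_of_pos hx
  calc Gamma (x + δ) = Gamma (δ * (x + 1) + (1 - δ) * x) := by ring_nf
    _ ≤ Gamma (x + 1) ^ δ * Gamma x ^ (1 - δ) :=
      Gamma_mul_add_mul_le_rpow_Gamma_mul_rpow_Gamma (by positivity) hx hδ₀ (by linarith)
        (by ring)
    _ = Gamma x * x ^ δ := by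
      rw [Gamma_add_one hx.ne', mul_rpow hx.le hΓ.le, mul_assoc, ← rpow_add hΓ]
      norm_num [mul_comm]

end Real

noncomputable def gammaRatio (x α : ℝ) : ℝ := Gamma (x + α) / (Gamma x * x ^ α)

theorem gammaRatio_le_one {x α : ℝ} (hx : 0 < x) (hα₀ : 0 ≤ α) (hα₁ : α ≤ 1) :
    gammaRatio x α ≤ 1 :=
  div_le_one_of_le₀ (Gamma_add_le_Gamma_mul_rpow hx hα₀ hα₁)
    (mul_pos (Gamma_pos_of_pos hx) (rpow_pos_of_pos hx α)).le

theorem div_add_le_gammaRatio {x α : ℝ} (hx : 0 < x) (hα₀ : 0 ≤ α) (hα₁ : α ≤ 1) :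
    x / (x + α) ≤ gammaRatio x α := by
  have hxα : 0 < x + α := by linarith
  have hΓ := Gamma_pos_of_pos hx
  have key : x * Gamma x ≤ Gamma (x + α) * (x + α) ^ (1 - α) := by
    rw [← Gamma_add_one hx.ne']
    convert Gamma_add_le_Gamma_mul_rpow hxα (sub_nonneg.2 hα₁) (by linarith) using 2
    ring
  calc x / (x + α) ≤ (x / (x + α)) ^ (1 - α) :=
        self_le_rpow_of_le_one (by positivity) (div_le_one_of_le₀ (by linarith) hxα.le)
          (by linarith)
    _ = x * Gamma x / ((x + α) ^ (1 - α) * (Gamma x * x ^ α)) := by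
        rw [div_rpow hx.le hxα.le, rpow_sub hx, rpow_one]
        field_simp
    _ ≤ gammaRatio x α := by
        rw [gammaRatio, div_le_div_iff₀ (by positivity) (by positivity)]
        calc x * Gamma x * (Gamma x * x ^ α)
            ≤ Gamma (x + α) * (x + α) ^ (1 - α) * (Gamma x * x ^ α) := by gcongr
          _ = _ := by ring

theorem gammaRatio_eq_gammaRatio_add_one_mul {x α : ℝ} (hx : 0 < x) (hxα : 0 < x + α) :
    gammaRatio x α = gammaRatio x (α + 1) * (x / (x + α)) := by
  have hΓ := Gamma_pos_of_pos hx
  have hΓα := Gamma_pos_of_pos hxα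
  rw [gammaRatio, gammaRatio, ← add_assoc, Gamma_add_one hxα.ne', rpow_add_one hx.ne']
  field_simp

theorem one_sub_inv_le_gammaRatio {x α : ℝ} (hx : 0 < x) (hα₀ : 0 ≤ α) (hα₁ : α ≤ 1) :
    1 - x⁻¹ ≤ gammaRatio x α := by
  refine le_trans ?_ (div_add_le_gammaRatio hx hα₀ hα₁)
  rw [le_div_iff₀ (by linarith)]
  nlinarith [mul_inv_cancel₀ hx.ne', inv_pos.2 hx]

theorem abs_one_sub_gammaRatio_le {x α : ℝ} (hx : 1 ≤ x) (hα₁ : -1 < α) (hα₂ : α ≤ 1) :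
    |1 - gammaRatio x α| ≤ 2 / ((1 + α) * x) := by
  have hx₀ : 0 < x := by linarith
  have hα : 0 < 1 + α := by linarith
  have hlower : 1 - x⁻¹ ≤ gammaRatio x α := by
    rcases le_or_gt 0 α with hα₀ | hα₀
    · exact one_sub_inv_le_gammaRatio hx₀ hα₀ hα₂
    · have hr := one_sub_inv_le_gammaRatio hx₀ (by linarith : 0 ≤ α + 1) (by linarith)
      have hxα : 0 < x + α := by linarith
      rw [gammaRatio_eq_gammaRatio_add_one_mul hx₀ hxα]
      refine hr.trans (le_mul_of_one_le_right ?_ ((one_le_div hxα).2 (by linarith)))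
      linarith [inv_le_one_of_one_le₀ hx]
  have hupper : gammaRatio x α ≤ 1 + ((1 + α) * x)⁻¹ := by
    rcases le_or_gt 0 α with hα₀ | hα₀
    · have : 0 ≤ ((1 + α) * x)⁻¹ := by positivity
      linarith [gammaRatio_le_one hx₀ hα₀ hα₂]
    · calc gammaRatio x α ≤ 1 * (x / (x + α)) := by
            rw [gammaRatio_eq_gammaRatio_add_one_mul hx₀ (by linarith)]
            gcongr ?_ * _
            · exact div_nonneg hx₀.le (by linarith)
            · exact gammaRatio_le_one hx₀ (by linarith) (by linarith)
        _ ≤ 1 + ((1 + α) * x)⁻¹ := by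
            have hpos : 0 < (1 + α) * x := by positivity
            have hu := mul_inv_cancel₀ hpos.ne'
            rw [one_mul, div_le_iff₀ (by linarith)]
            nlinarith [inv_pos.2 hpos, mul_le_mul_of_nonneg_left
              (by nlinarith : (1 + α) * x ≤ x + α) (inv_pos.2 hpos).le]
  have h₁ : x⁻¹ ≤ 2 / ((1 + α) * x) := by
    rw [inv_eq_one_div, div_le_div_iff₀ hx₀ (by positivity)]; nlinarith
  have h₂ : ((1 + α) * x)⁻¹ ≤ 2 / ((1 + α) * x) := by
    rw [inv_eq_one_div]; gcongr; norm_num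
  rw [abs_le]; constructor <;> linarith

theorem integral_one_sub_mul_rpow_mul_rpow_mul_exp_neg_mul {a b c p : ℝ} (ha : 0 < a)
    (hap : 0 < a + p) (hb : 0 < b) :
    ∫ t in Ioi 0, (1 - c * t ^ p) * (t ^ (a - 1) * exp (-(b * t))) =
      (1 / b) ^ a * Gamma a - c * ((1 / b) ^ (a + p) * Gamma (a + p)) := by
  have integrable {s : ℝ} (hs : 0 < s) :
      IntegrableOn (fun t ↦ t ^ (s - 1) * exp (-(b * t))) (Ioi 0) :=
    .of_integral_ne_zero (by rw [integral_rpow_mul_exp_neg_mul_Ioi hs hb]; positivity)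
  have split : EqOn (fun t ↦ (1 - c * t ^ p) * (t ^ (a - 1) * exp (-(b * t))))
      (fun t ↦ t ^ (a - 1) * exp (-(b * t)) - c * (t ^ (a + p - 1) * exp (-(b * t))))
      (Ioi 0) := fun t (ht : 0 < t) ↦ by
    simp only
    rw [add_sub_right_comm, rpow_add ht]
    ring
  rw [setIntegral_congr_fun measurableSet_Ioi split,
    integral_sub (integrable ha) ((integrable hap).const_mul c), integral_const_mul,
    integral_rpow_mul_exp_neg_mul_Ioi ha hb, integral_rpow_mul_exp_neg_mul_Ioi hap hb]

noncomputable def erlangDensity (j : ℕ) (x t : ℝ) : ℝ :=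
  x ^ j / ((j - 1)! : ℝ) * t ^ (j - 1) * exp (-x * t)

theorem integral_one_sub_rpow_mul_exp_mul_erlangDensity {j : ℕ} {x R α : ℝ} (hj : 1 ≤ j)
    (hx : 0 ≤ x) (hRx : R < x) (hα : -1 < α) :
    ∫ t in Ioi 0, (1 - (t * x / j) ^ α) * exp (R * t) * erlangDensity j x t =
      (x / (x - R)) ^ j * (1 - (x / (x - R)) ^ α * gammaRatio j α) := by
  have hj₁ : (1 : ℝ) ≤ j := by exact_mod_cast hj
  have hj₀ : (0 : ℝ) < j := by linarith
  have hb : 0 < x - R := sub_pos.2 hRx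
  have hΓ : Gamma j = ((j - 1)! : ℝ) := by
    rw [← Gamma_nat_eq_factorial, Nat.cast_sub hj, Nat.cast_one, sub_add_cancel]
  have integrand : EqOn (fun t ↦ (1 - (t * x / j) ^ α) * exp (R * t) * erlangDensity j x t)
      (fun t ↦ x ^ j / Gamma j *
        ((1 - (x / j) ^ α * t ^ α) * (t ^ ((j : ℝ) - 1) * exp (-((x - R) * t)))))
      (Ioi 0) := fun t (ht : 0 < t) ↦ by
    have hpow : t ^ (j - 1) = t ^ ((j : ℝ) - 1) := by
      rw [← rpow_natCast, Nat.cast_sub hj, Nat.cast_one]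
    simp only [erlangDensity]
    rw [hΓ, hpow, show t * x / j = x / j * t by ring, mul_rpow (by positivity) ht.le,
      show -((x - R) * t) = R * t + -x * t by ring, exp_add]
    ring
  rw [setIntegral_congr_fun measurableSet_Ioi integrand, integral_const_mul,
    integral_one_sub_mul_rpow_mul_rpow_mul_exp_neg_mul hj₀ (by linarith) hb, gammaRatio,
    rpow_add (by positivity), rpow_natCast, div_rpow hx hb.le, div_rpow hx hj₀.le,
    div_rpow zero_le_one hb.le, one_rpow]
  have := Gamma_pos_of_pos hj₀
  field_simp
  ring

theorem abs_one_sub_rpow_le {q α : ℝ} (hq : 1 ≤ q) (hα₁ : -1 ≤ α) (hα₂ : α ≤ 1) :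
    |1 - q ^ α| ≤ q - 1 := by
  rcases le_or_gt 0 α with hα₀ | hα₀
  · rw [abs_sub_comm, abs_of_nonneg (sub_nonneg.2 (one_le_rpow hq hα₀))]
    linarith [rpow_le_self_of_one_le hq hα₂]
  · have hinv : q⁻¹ ≤ q ^ α := by
      simpa only [rpow_neg_one] using rpow_le_rpow_of_exponent_le hq hα₁
    rw [abs_of_nonneg (sub_nonneg.2 (rpow_le_one_of_one_le_of_nonpos hq hα₀.le))]
    have : 1 - q⁻¹ ≤ q - 1 := by
      nlinarith [mul_inv_cancel₀ (by linarith : q ≠ 0), inv_pos.2 (by linarith : 0 < q)]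
    linarith

theorem mul_abs_pow_mul_one_sub_rpow_mul_le {q α r : ℝ} (j : ℕ) (hq₁ : 1 ≤ q) (hq₂ : q ≤ 2)
    (hα₁ : -1 ≤ α) (hα₂ : α ≤ 1) :
    j * |q ^ j * (1 - q ^ α * r)| ≤ exp (j * (q - 1)) * (j * (q - 1) + 2 * (j * |1 - r|)) := by
  have hqα : 0 ≤ q ^ α := by positivity
  have hpow : q ^ j ≤ exp (j * (q - 1)) := by
    rw [exp_nat_mul]
    exact pow_le_pow_left₀ (by linarith) (by linarith [add_one_le_exp (q - 1)]) j
  have hfactor : |1 - q ^ α * r| ≤ (q - 1) + 2 * |1 - r| :=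
    calc |1 - q ^ α * r| = |(1 - q ^ α) + q ^ α * (1 - r)| := by ring_nf
      _ ≤ |1 - q ^ α| + q ^ α * |1 - r| := by
        rw [← abs_of_nonneg hqα, ← abs_mul, abs_of_nonneg hqα]; exact abs_add_le _ _
      _ ≤ (q - 1) + 2 * |1 - r| := by
        gcongr
        · exact abs_one_sub_rpow_le hq₁ hα₁ hα₂
        · exact (rpow_le_self_of_one_le hq₁ hα₂).trans hq₂
  rw [abs_mul, abs_of_nonneg (by positivity), mul_left_comm]
  calc q ^ j * (j * |1 - q ^ α * r|) ≤ exp (j * (q - 1)) * (j * ((q - 1) + 2 * |1 - r|)) := by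
        gcongr
    _ = _ := by ring

/-- Verification of condition (M3) for the exponential measures `dμ_n(t) = n e^{-nt} dt`,
whose `j`-fold convolutions have densities `t ↦ (n^j/(j-1)!) t^(j-1) e^{-nt}`:
for every `R ≥ 0` and `α ∈ (-1, 1]` there is a constant `C` such that for all
`n ≥ max (2R) 1` and `1 ≤ j ≤ n`,
`j * |∫₀^∞ (1 - (tn/j)^α) e^{Rt} (n^j/(j-1)!) t^(j-1) e^{-nt} dt| ≤ C`. -/
theorem stmt0 (R : ℝ) (hR : 0 ≤ R) (α : ℝ) (hα₁ : -1 < α) (hα₂ : α ≤ 1) :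
    ∃ C : ℝ, ∀ n j : ℕ, max (2 * R) 1 ≤ (n : ℝ) → 1 ≤ j → j ≤ n →
      (j : ℝ) *
        |∫ t in Set.Ioi (0 : ℝ),
            (1 - (t * (n : ℝ) / (j : ℝ)) ^ α) * Real.exp (R * t) *
              ((n : ℝ) ^ j / (Nat.factorial (j - 1) : ℝ) * t ^ (j - 1) *
                Real.exp (-(n : ℝ) * t))| ≤ C := by
  refine ⟨exp (2 * R) * (2 * R + 2 * (2 / (1 + α))), fun n j hn hj hjn ↦ ?_⟩
  have hRn : 2 * R ≤ n := le_of_max_le_left hn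
  have hj₁ : (1 : ℝ) ≤ j := by exact_mod_cast hj
  have hjn : (j : ℝ) ≤ n := by exact_mod_cast hjn
  have hb : 0 < (n : ℝ) - R := by linarith
  have hq₁ : 1 ≤ (n : ℝ) / (n - R) := (one_le_div hb).2 (by linarith)
  have hq₂ : (n : ℝ) / (n - R) ≤ 2 := (div_le_iff₀ hb).2 (by linarith)
  have hjq : j * ((n : ℝ) / (n - R) - 1) ≤ 2 * R := by
    rw [div_sub_one hb.ne', mul_div_assoc', div_le_iff₀ hb]
    nlinarith
  have hjr : j * |1 - gammaRatio j α| ≤ 2 / (1 + α) := by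
    have := abs_one_sub_gammaRatio_le hj₁ hα₁ hα₂
    rwa [← le_div_iff₀' (by linarith), div_div]
  have hI := integral_one_sub_rpow_mul_exp_mul_erlangDensity hj n.cast_nonneg
    (by linarith : R < n) hα₁
  simp only [erlangDensity] at hI
  rw [hI]
  refine (mul_abs_pow_mul_one_sub_rpow_mul_le j hq₁ hq₂ hα₁.le hα₂).trans ?_
  gcongr
end

section
/- For every integer j ≥ 2 and every x ∈ [−1, 1] with x ≠ 0 one has 0 ≤ (1/x) · (1 − Γ(j+x) / (j^x · Γ(j))) ≤ 1/(j−1). In particular Γ(j+x) ≤ j^x Γ(j) for x ∈ (0,1] and Γ(j+x) ≥ j^x Γ(j) · (1 − |x|/(j−1)) for x ∈ [−1,0). -/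
/-!
Since `log ∘ Γ` is convex on `(0, ∞)`, the slope of its secant from `n` to `n + x` is monotone
in `x`; by `Γ (s + 1) = s Γ s` the secants over `[n - 1, n]` and `[n, n + 1]` have slopes
`log (n - 1)` and `log n`. Hence for `x ∈ [-1, 1]` the ratio `Γ (n + x) / Γ n` lies between
`n ^ x` and `(n - 1) ^ x`, and it remains to compare `((n - 1) / n) ^ x` with `1 - x / (n - 1)`:
for `x > 0` by `1 + t ≤ exp t`, for `x < 0` by Bernoulli's inequality with exponent `-x ≤ 1`.
-/

open Real Set

section

variable {n x : ℝ}

lemma slope_log_Gamma_mem_Icc (hn : 1 < n) (hx : x ∈ Icc (-1) 1) (hx0 : x ≠ 0) :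
    (log (Gamma (n + x)) - log (Gamma n)) / x ∈ Icc (log (n - 1)) (log n) := by
  have hpos : ∀ y, n - 1 ≤ y → y ∈ Ioi (0 : ℝ) := fun y hy => mem_Ioi.2 (by linarith)
  have hn' := hpos n (by linarith)
  have hnx := hpos (n + x) (by linarith [hx.1])
  have hnx0 : n + x ≠ n := by simpa using hx0
  have hΓ : log (Gamma n) = log (n - 1) + log (Gamma (n - 1)) := by
    have h := Gamma_add_one (s := n - 1) (by linarith)
    rw [sub_add_cancel] at h
    rw [h, log_mul (by linarith) (Gamma_pos_of_pos (by linarith)).ne']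
  constructor
  · have h := convexOn_log_Gamma.secant_mono hn' (hpos (n - 1) le_rfl) hnx (by linarith) hnx0
      (by linarith [hx.1])
    simp only [Function.comp_apply, sub_sub_cancel_left, add_sub_cancel_left, div_neg,
      div_one] at h
    rw [hΓ] at h ⊢
    linarith
  · have h := convexOn_log_Gamma.secant_mono hn' hnx (hpos (n + 1) (by linarith)) hnx0
      (by simp) (by linarith [hx.2])
    simp only [Function.comp_apply, add_sub_cancel_left, div_one,
      Gamma_add_one (by linarith : n ≠ 0)] at h
    rwa [log_mul (by linarith) (Gamma_pos_of_pos (by linarith)).ne', add_sub_cancel_right] at h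

lemma Gamma_add_mem_Icc_of_pos (hn : 1 < n) (hx0 : 0 < x) (hx1 : x ≤ 1) :
    Gamma (n + x) ∈ Icc ((n - 1) ^ x * Gamma n) (n ^ x * Gamma n) := by
  obtain ⟨hlo, hhi⟩ := slope_log_Gamma_mem_Icc hn ⟨by linarith, hx1⟩ hx0.ne'
  rw [le_div_iff₀ hx0] at hlo
  rw [div_le_iff₀ hx0] at hhi
  have hΓ := Gamma_pos_of_pos (by linarith : 0 < n)
  have hΓx := Gamma_pos_of_pos (by linarith : 0 < n + x)
  constructor
  · rw [← log_le_log_iff (by positivity) hΓx, log_mul (by positivity) hΓ.ne',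
      log_rpow (by linarith)]
    linarith
  · rw [← log_le_log_iff hΓx (by positivity), log_mul (by positivity) hΓ.ne',
      log_rpow (by linarith)]
    linarith

lemma Gamma_add_mem_Icc_of_neg (hn : 1 < n) (hx0 : -1 ≤ x) (hx1 : x < 0) :
    Gamma (n + x) ∈ Icc (n ^ x * Gamma n) ((n - 1) ^ x * Gamma n) := by
  obtain ⟨hlo, hhi⟩ := slope_log_Gamma_mem_Icc hn ⟨hx0, by linarith⟩ hx1.ne
  rw [le_div_iff_of_neg hx1] at hlo
  rw [div_le_iff_of_neg hx1] at hhi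
  have hΓ := Gamma_pos_of_pos (by linarith : 0 < n)
  have hΓx := Gamma_pos_of_pos (by linarith : 0 < n + x)
  constructor
  · rw [← log_le_log_iff (by positivity) hΓx, log_mul (by positivity) hΓ.ne',
      log_rpow (by linarith)]
    linarith
  · rw [← log_le_log_iff hΓx (by positivity), log_mul (by positivity) hΓ.ne',
      log_rpow (by linarith)]
    linarith

lemma rpow_mul_one_sub_div_le_rpow_sub_one (hn : 1 < n) (hx : 0 ≤ x) :
    n ^ x * (1 - x / (n - 1)) ≤ (n - 1) ^ x := by
  have hn0 : 0 < n := by linarith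
  have hn1 : 0 < n - 1 := by linarith
  have hlog : log n - 1 / (n - 1) ≤ log (n - 1) := by
    have h := log_le_sub_one_of_pos (div_pos hn0 hn1)
    rw [log_div hn0.ne' hn1.ne'] at h
    have : n / (n - 1) - 1 = 1 / (n - 1) := by field_simp; ring
    linarith
  calc n ^ x * (1 - x / (n - 1)) ≤ n ^ x * exp (-(x / (n - 1))) := by
        gcongr
        linarith [add_one_le_exp (-(x / (n - 1)))]
    _ = exp (x * (log n - 1 / (n - 1))) := by
        rw [rpow_def_of_pos hn0, ← exp_add]
        ring_nf
    _ ≤ exp (x * log (n - 1)) := by gcongr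
    _ = (n - 1) ^ x := by rw [rpow_def_of_pos hn1, mul_comm]

lemma rpow_sub_one_le_rpow_mul_one_sub_div (hn : 1 < n) (hx0 : -1 ≤ x) (hx1 : x ≤ 0) :
    (n - 1) ^ x ≤ n ^ x * (1 - x / (n - 1)) := by
  have hn0 : 0 < n := by linarith
  have hn1 : 0 < n - 1 := by linarith
  have hbernoulli := rpow_one_add_le_one_add_mul_self (s := 1 / (n - 1))
    (by linarith [one_div_pos.2 hn1]) (p := -x) (by linarith) (by linarith)
  calc (n - 1) ^ x = n ^ x * (1 + 1 / (n - 1)) ^ (-x) := by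
        rw [show 1 + 1 / (n - 1) = n / (n - 1) by field_simp; ring, div_rpow hn0.le hn1.le,
          rpow_neg hn0.le, rpow_neg hn1.le]
        field_simp
    _ ≤ n ^ x * (1 + -x * (1 / (n - 1))) := by gcongr
    _ = n ^ x * (1 - x / (n - 1)) := by ring

lemma one_div_mul_one_sub_Gamma_ratio_mem_Icc (hn : 1 < n) (hx : x ∈ Icc (-1) 1) (hx0 : x ≠ 0) :
    1 / x * (1 - Gamma (n + x) / (n ^ x * Gamma n)) ∈ Icc 0 (1 / (n - 1)) := by
  have hΓ := Gamma_pos_of_pos (by linarith : 0 < n)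
  have ha : 0 < n ^ x * Gamma n := mul_pos (rpow_pos_of_pos (by linarith) x) hΓ
  rw [one_div_mul_eq_div]
  rcases hx0.lt_or_gt with hneg | hpos
  · obtain ⟨hlo, hhi⟩ := Gamma_add_mem_Icc_of_neg hn hx.1 hneg
    have hhi' := hhi.trans (mul_le_mul_of_nonneg_right
      (rpow_sub_one_le_rpow_mul_one_sub_div hn hx.1 hneg.le) hΓ.le)
    rw [← one_le_div ha] at hlo
    rw [mul_right_comm, ← div_le_iff₀' ha] at hhi'
    refine ⟨div_nonneg_of_nonpos (by linarith) hneg.le, ?_⟩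
    rw [div_le_iff_of_neg hneg]
    linarith [div_eq_mul_one_div x (n - 1)]
  · obtain ⟨hlo, hhi⟩ := Gamma_add_mem_Icc_of_pos hn hpos hx.2
    have hlo' := (mul_le_mul_of_nonneg_right
      (rpow_mul_one_sub_div_le_rpow_sub_one hn hpos.le) hΓ.le).trans hlo
    rw [← div_le_one ha] at hhi
    rw [mul_right_comm, ← le_div_iff₀' ha] at hlo'
    refine ⟨div_nonneg (by linarith) hpos.le, ?_⟩
    rw [div_le_iff₀ hpos]
    linarith [div_eq_mul_one_div x (n - 1)]

end

/-- For every integer `j ≥ 2` and every `x ∈ [-1,1]`, `x ≠ 0`, one has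
`0 ≤ (1/x)(1 - Γ(j+x)/(j^x Γ(j))) ≤ 1/(j-1)`.  In particular
`Γ(j+x) ≤ j^x Γ(j)` for `x ∈ (0,1]` and
`Γ(j+x) ≥ j^x Γ(j) (1 - |x|/(j-1))` for `x ∈ [-1,0)`. -/
theorem stmt1 (j : ℕ) (hj : 2 ≤ j) :
    (∀ x : ℝ, x ∈ Set.Icc (-1 : ℝ) 1 → x ≠ 0 →
      0 ≤ (1 / x) * (1 - Real.Gamma ((j : ℝ) + x) / ((j : ℝ) ^ x * Real.Gamma j)) ∧
      (1 / x) * (1 - Real.Gamma ((j : ℝ) + x) / ((j : ℝ) ^ x * Real.Gamma j)) ≤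
        1 / ((j : ℝ) - 1)) ∧
    (∀ x : ℝ, 0 < x → x ≤ 1 →
      Real.Gamma ((j : ℝ) + x) ≤ (j : ℝ) ^ x * Real.Gamma j) ∧
    (∀ x : ℝ, -1 ≤ x → x < 0 →
      (j : ℝ) ^ x * Real.Gamma j * (1 - |x| / ((j : ℝ) - 1)) ≤
        Real.Gamma ((j : ℝ) + x)) := by
  have hn : (1 : ℝ) < j := by exact_mod_cast hj
  refine ⟨fun x hx hx0 => one_div_mul_one_sub_Gamma_ratio_mem_Icc hn hx hx0,
    fun x hx0 hx1 => (Gamma_add_mem_Icc_of_pos hn hx0 hx1).2, fun x hx0 hx1 => ?_⟩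
  have hΓ := Gamma_pos_of_pos (by linarith : (0 : ℝ) < j)
  have habs : 0 ≤ |x| / ((j : ℝ) - 1) := div_nonneg (abs_nonneg x) (by linarith)
  calc (j : ℝ) ^ x * Gamma j * (1 - |x| / ((j : ℝ) - 1)) ≤ (j : ℝ) ^ x * Gamma j :=
        mul_le_of_le_one_right (by positivity) (by linarith)
    _ ≤ Gamma (j + x) := (Gamma_add_mem_Icc_of_neg hn hx0 hx1).1
end

section
/- For every integer j ≥ 2, the function x ↦ Γ(j+x) / (j^x · Γ(j)) is convex on the interval [−1, 1] (equivalently, the function h_j(x) = 1 − Γ(j+x)/(j^x Γ(j)) is concave on [−1, 1]). -/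
/-!
`Γ(a + x) / (b ^ x Γ(a))` is the exponential of `log Γ(a + x) - x log b - log Γ(a)`, which is
convex in `x > -a` because `Γ` is log-convex (Bohr–Mollerup); the exponential of a convex function
is convex. For `j ≥ 2` the interval `[-1, 1]` lies inside `(-j, ∞)`.
-/

open Real Set

theorem ConvexOn.exp_comp {E : Type*} [AddCommMonoid E] [Module ℝ E] {s : Set E} {f : E → ℝ}
    (hf : ConvexOn ℝ s f) : ConvexOn ℝ s fun x => exp (f x) :=
  ⟨hf.1, fun _ hx _ hy _ _ ha hb hab =>
    (exp_le_exp.2 (hf.2 hx hy ha hb hab)).trans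
      (convexOn_exp.2 (mem_univ _) (mem_univ _) ha hb hab)⟩

theorem convexOn_log_Gamma_add_sub_mul {a : ℝ} (c : ℝ) :
    ConvexOn ℝ (Ioi (-a)) fun x => log (Gamma (a + x)) - c * x := by
  have hlogGamma : ConvexOn ℝ (Ioi (-a)) fun x => log (Gamma (a + x)) := by
    simpa [Function.comp_def, preimage_const_add_Ioi, add_comm] using
      convexOn_log_Gamma.translate_right a
  refine (hlogGamma.add ((LinearMap.mul ℝ ℝ (-c)).convexOn (convex_Ioi (-a)))).congr
    fun x _ => ?_
  simp [sub_eq_add_neg]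

theorem convexOn_Gamma_add_div_rpow_mul_Gamma {a b : ℝ} (ha : 0 < a) (hb : 0 < b) :
    ConvexOn ℝ (Ioi (-a)) fun x => Gamma (a + x) / (b ^ x * Gamma a) := by
  refine (((convexOn_log_Gamma_add_sub_mul (log b)).exp_comp).smul
    (inv_nonneg.2 (Gamma_pos_of_pos ha).le)).congr fun x hx => ?_
  have hax : 0 < a + x := neg_lt_iff_pos_add'.1 hx
  simp only [smul_eq_mul]
  rw [exp_sub, exp_log (Gamma_pos_of_pos hax), mul_comm (log b), ← log_rpow hb,
    exp_log (rpow_pos_of_pos hb x)]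
  field_simp

/-- For every integer `j ≥ 2`, the function `x ↦ Γ(j+x)/(j^x Γ(j))` is convex on `[-1,1]`
(equivalently `h_j(x) = 1 - Γ(j+x)/(j^x Γ(j))` is concave on `[-1,1]`). -/
theorem stmt2 (j : ℕ) (hj : 2 ≤ j) :
    ConvexOn ℝ (Set.Icc (-1 : ℝ) 1)
      (fun x : ℝ => Real.Gamma ((j : ℝ) + x) / ((j : ℝ) ^ x * Real.Gamma j)) := by
  have hj' : (2 : ℝ) ≤ j := by exact_mod_cast hj
  have hjpos : (0 : ℝ) < j := by linarith
  refine (convexOn_Gamma_add_div_rpow_mul_Gamma hjpos hjpos).subset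
    (fun x hx => ?_) (convex_Icc _ _)
  exact (show -(j : ℝ) < -1 by linarith).trans_le hx.1
end

section
/- Let n, a ∈ ℝ with 0 ≤ a < n, let j ≥ 1 be an integer, and let α ∈ ℝ with α > −j. Then ∫₀^∞ (1 − (t n / j)^α) · e^{a t} · (n^j/(j−1)!) · t^{j−1} · e^{−n t} dt = (n/(n−a))^j · (1 − (n/(n−a))^α) + (n/(n−a))^{j+α} · (1 − Γ(j+α)/(j^α · Γ(j))). -/
/-!
The factor `e^{at}` turns the Erlang kernel `t^{j-1} e^{-nt}` into `t^{j-1} e^{-(n-a)t}`, so the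
integral splits into two Gamma integrals `∫₀^∞ t^{r-1} e^{-bt} dt = Γ(r) / b^r`, of orders `r = j`
and `r = j + α`; the rest is algebra with real powers.
-/

open MeasureTheory Real Set

theorem integral_one_sub_rpow_mul_rpow_mul_exp_neg_mul_Ioi {s α b c : ℝ} (hs : 0 < s)
    (hsα : 0 < s + α) (hb : 0 < b) (hc : 0 ≤ c) :
    ∫ t in Ioi 0, (1 - (t * c) ^ α) * (t ^ (s - 1) * exp (-(b * t))) =
      Gamma s / b ^ s - c ^ α * Gamma (s + α) / b ^ (s + α) := by
  have gammaIntegral {r : ℝ} (hr : 0 < r) :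
      ∫ t in Ioi 0, t ^ (r - 1) * exp (-(b * t)) = Gamma r / b ^ r := by
    rw [integral_rpow_mul_exp_neg_mul_Ioi hr hb, div_rpow zero_le_one hb.le, one_rpow,
      one_div_mul_eq_div]
  have integrable {r : ℝ} (hr : 0 < r) :
      IntegrableOn (fun t ↦ t ^ (r - 1) * exp (-(b * t))) (Ioi 0) :=
    .of_integral_ne_zero (by rw [gammaIntegral hr]; exact (div_pos (Gamma_pos_of_pos hr)
      (rpow_pos_of_pos hb r)).ne')
  have split : EqOn (fun t ↦ (1 - (t * c) ^ α) * (t ^ (s - 1) * exp (-(b * t))))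
      (fun t ↦ t ^ (s - 1) * exp (-(b * t)) - c ^ α * (t ^ (s + α - 1) * exp (-(b * t))))
      (Ioi 0) := by
    intro t (ht : 0 < t)
    dsimp only
    rw [mul_rpow ht.le hc, show s + α - 1 = s - 1 + α by ring, rpow_add ht]
    ring
  rw [setIntegral_congr_fun measurableSet_Ioi split,
    integral_sub (integrable hs) ((integrable hsα).const_mul _), integral_const_mul,
    gammaIntegral hs, gammaIntegral hsα, mul_div_assoc]

/-- For `0 ≤ a < n` real, `j ≥ 1` integer and `α > -j`:
`∫₀^∞ (1 - (tn/j)^α) e^{at} (n^j/(j-1)!) t^(j-1) e^{-nt} dt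
  = (n/(n-a))^j (1 - (n/(n-a))^α) + (n/(n-a))^(j+α) (1 - Γ(j+α)/(j^α Γ(j)))`. -/
theorem stmt5 (n a : ℝ) (ha : 0 ≤ a) (han : a < n) (j : ℕ) (hj : 1 ≤ j)
    (α : ℝ) (hα : -(j : ℝ) < α) :
    ∫ t in Set.Ioi (0 : ℝ),
        (1 - (t * n / (j : ℝ)) ^ α) * Real.exp (a * t) *
          (n ^ j / (Nat.factorial (j - 1) : ℝ) * t ^ (j - 1) * Real.exp (-n * t)) =
      (n / (n - a)) ^ j * (1 - (n / (n - a)) ^ α) +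
        (n / (n - a)) ^ ((j : ℝ) + α) *
          (1 - Real.Gamma ((j : ℝ) + α) / ((j : ℝ) ^ α * Real.Gamma j)) := by
  have hn : 0 < n := ha.trans_lt han
  have hb : 0 < n - a := sub_pos.2 han
  have hj₀ : (0 : ℝ) < j := by exact_mod_cast hj
  have hΓ : Gamma j = (j - 1).factorial := by
    rw [← Gamma_nat_eq_factorial, Nat.cast_sub hj, Nat.cast_one, sub_add_cancel]
  have integrand : EqOn
      (fun t ↦ (1 - (t * n / (j : ℝ)) ^ α) * exp (a * t) *
          (n ^ j / ((j - 1).factorial : ℝ) * t ^ (j - 1) * exp (-n * t)))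
      (fun t ↦ n ^ j / Gamma j *
          ((1 - (t * (n / j)) ^ α) * (t ^ ((j : ℝ) - 1) * exp (-((n - a) * t)))))
      (Ioi 0) := by
    intro t _
    have hpow : t ^ (j - 1) = t ^ ((j : ℝ) - 1) := by
      rw [← rpow_natCast, Nat.cast_sub hj, Nat.cast_one]
    dsimp only
    rw [hΓ, hpow, mul_div_assoc t, show -((n - a) * t) = a * t + -n * t by ring, exp_add]
    ring
  rw [setIntegral_congr_fun measurableSet_Ioi integrand, integral_const_mul,
    integral_one_sub_rpow_mul_rpow_mul_exp_neg_mul_Ioi hj₀ (by linarith) hb (by positivity),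
    rpow_add (div_pos hn hb), div_rpow hn.le hb.le, div_rpow hn.le hj₀.le, rpow_add hb]
  simp only [rpow_natCast]
  rw [div_pow]
  field_simp
  ring
end

section
/- Let a > 0, let α ∈ [−1, 1], and let n ∈ ℝ with n ≥ 2a. Then |1 − (n/(n−a))^α| ≤ 2 |α| · a / n. -/
/-!
Put `x = n / (n - a) ≥ 1` and `y = x ^ |α|`. Bernoulli's inequality for the exponent `|α| ≤ 1`
gives `1 ≤ y ≤ 1 + |α| (x - 1)`; since `x ^ α` is `y` or `y⁻¹` and `1 - y⁻¹ ≤ log y ≤ y - 1`,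
we get `|1 - x ^ α| ≤ |α| (x - 1)`. Finally `x - 1 = a / (n - a) ≤ 2a / n` because `n - a ≥ n / 2`.
-/

open Real

lemma abs_one_sub_inv_le_sub_one {y : ℝ} (hy : 1 ≤ y) : |1 - y⁻¹| ≤ y - 1 := by
  have hy0 : 0 < y := one_pos.trans_le hy
  rw [abs_of_nonneg (sub_nonneg.2 (inv_le_one_of_one_le₀ hy))]
  exact (one_sub_inv_le_log_of_pos hy0).trans (log_le_sub_one_of_pos hy0)

lemma rpow_sub_one_le_mul_sub_one {x p : ℝ} (hx : 0 ≤ x) (hp0 : 0 ≤ p) (hp1 : p ≤ 1) :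
    x ^ p - 1 ≤ p * (x - 1) := by
  have := rpow_one_add_le_one_add_mul_self (s := x - 1) (by linarith) hp0 hp1
  rw [add_sub_cancel] at this
  linarith

lemma abs_one_sub_rpow_le_mul_sub_one {x α : ℝ} (hx : 1 ≤ x) (hα : |α| ≤ 1) :
    |1 - x ^ α| ≤ |α| * (x - 1) := by
  have hx0 : 0 ≤ x := zero_le_one.trans hx
  have hy : 1 ≤ x ^ |α| := one_le_rpow hx (abs_nonneg α)
  have hy_le : x ^ |α| - 1 ≤ |α| * (x - 1) :=
    rpow_sub_one_le_mul_sub_one hx0 (abs_nonneg α) hα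
  refine le_trans ?_ hy_le
  rcases abs_choice α with hαabs | hαabs
  · conv_lhs => rw [← hαabs, abs_sub_comm, abs_of_nonneg (sub_nonneg.2 hy)]
  · conv_lhs => rw [show α = -|α| by linarith, rpow_neg hx0]
    exact abs_one_sub_inv_le_sub_one hy

lemma div_sub_self_sub_one_le {a n : ℝ} (ha : 0 < a) (hn : 2 * a ≤ n) :
    n / (n - a) - 1 ≤ 2 * a / n := by
  have hna : 0 < n - a := by linarith
  rw [div_sub_one hna.ne', sub_sub_cancel, div_le_div_iff₀ hna (by linarith)]
  nlinarith

/-- For `a > 0`, `α ∈ [-1,1]` and `n ≥ 2a`: `|1 - (n/(n-a))^α| ≤ 2|α| a / n`. -/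
theorem stmt6 (a α n : ℝ) (ha : 0 < a) (hα : α ∈ Set.Icc (-1 : ℝ) 1) (hn : 2 * a ≤ n) :
    |1 - (n / (n - a)) ^ α| ≤ 2 * |α| * a / n := by
  have hx : 1 ≤ n / (n - a) := (one_le_div (by linarith)).2 (by linarith)
  calc |1 - (n / (n - a)) ^ α|
      ≤ |α| * (n / (n - a) - 1) := abs_one_sub_rpow_le_mul_sub_one hx (abs_le.2 hα)
    _ ≤ |α| * (2 * a / n) := by gcongr; exact div_sub_self_sub_one_le ha hn
    _ = 2 * |α| * a / n := by ring
end

section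
/- For every δ ∈ [0, 1] there exists a constant C such that for every integer j ≥ 1 and every real u ≥ 0 one has |(1+u)^{−j} − e^{−j u}| ≤ C · u^δ · j^{δ−1}. (This is the scalar instance, for the scalar semigroup S(t) = e^{−λt} and the implicit Euler approximation (1 + λT/n)^{−j} of S(jT/n), of the uniform boundedness part of the paper's estimate on the difference between the Euler approximants E(t_j^{(n)}) and the analytic semigroup S(t_j^{(n)}).) -/
/-!
With `r = (1 + u) e^{-u}` one has `(1 + u)^{-j} - e^{-ju} = (1 + u)^{-j} (1 - r^j)` and
`1 - u² ≤ r ≤ 1`, so Bernoulli's inequality gives `0 ≤ 1 - r^j ≤ j u²`. Hence `j` times the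
difference is at most `(ju)²`, and also at most `4`: for `j ≥ 2` because `(1 + u)^j ≥ (ju/2)²`,
and trivially for `j = 1`. Finally `min (x², 4) ≤ 4 x^δ` for `δ ∈ [0, 1]`, applied to `x = ju`.
-/

open Real

lemma one_sub_sq_le_one_add_mul_exp_neg {u : ℝ} (hu : -1 ≤ u) :
    1 - u ^ 2 ≤ (1 + u) * exp (-u) := by
  have h := add_one_le_exp (-u)
  nlinarith

lemma one_add_mul_exp_neg_le_one (u : ℝ) : (1 + u) * exp (-u) ≤ 1 := by
  rw [exp_neg, ← div_eq_mul_inv, div_le_one (exp_pos u)]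
  linarith [add_one_le_exp u]

lemma sq_natCast_mul_le_four_mul_one_add_pow {n : ℕ} (hn : 2 ≤ n) {u : ℝ} (hu : 0 ≤ u) :
    (n * u) ^ 2 ≤ 4 * (1 + u) ^ n := by
  have hp : (1 : ℝ) ≤ n / 2 := by
    rw [le_div_iff₀ two_pos]; exact_mod_cast hn
  have h := one_add_mul_self_le_rpow_one_add (by linarith : (-1 : ℝ) ≤ u) hp
  have hsq : (1 + u) ^ n = ((1 + u) ^ ((n : ℝ) / 2)) ^ 2 := by
    rw [← rpow_natCast _ 2, ← rpow_mul (by linarith)]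
    norm_num
  rw [hsq]
  nlinarith [pow_le_pow_left₀ (by positivity) h 2]

lemma rpow_neg_natCast_sub_exp_neg_mul {u : ℝ} (hu : -1 < u) (n : ℕ) :
    (1 + u) ^ (-(n : ℝ)) - exp (-(n * u)) = ((1 + u) ^ n)⁻¹ * (1 - ((1 + u) * exp (-u)) ^ n) := by
  have : (1 + u) ^ n ≠ 0 := pow_ne_zero _ (by linarith)
  rw [rpow_neg (by linarith), rpow_natCast, mul_pow, ← exp_nat_mul, mul_neg]
  field_simp

lemma natCast_mul_abs_rpow_neg_natCast_sub_exp_neg_mul_le {n : ℕ} (hn : 1 ≤ n) {u : ℝ} (hu : 0 ≤ u) :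
    n * |(1 + u) ^ (-(n : ℝ)) - exp (-(n * u))| ≤ min ((n * u) ^ 2) 4 := by
  rw [rpow_neg_natCast_sub_exp_neg_mul (by linarith) n]
  set q := (1 + u) ^ n
  set r := (1 + u) * exp (-u)
  have hr0 : 0 ≤ r := by positivity
  have hr1 : r ≤ 1 := one_add_mul_exp_neg_le_one u
  have hq : 1 ≤ q := one_le_pow₀ (by linarith)
  have hq0 : 0 ≤ q⁻¹ := by positivity
  have hq1 : q⁻¹ ≤ 1 := inv_le_one_of_one_le₀ hq
  have hE0 : 0 ≤ 1 - r ^ n := sub_nonneg.mpr (pow_le_one₀ hr0 hr1)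
  have hE1 : 1 - r ^ n ≤ 1 := by linarith [pow_nonneg hr0 n]
  have hEn : 1 - r ^ n ≤ n * u ^ 2 := by
    have := one_add_mul_sub_le_pow (by linarith : (-1 : ℝ) ≤ r) n
    have := one_sub_sq_le_one_add_mul_exp_neg (by linarith : (-1 : ℝ) ≤ u)
    nlinarith
  have hsq : n * (q⁻¹ * (1 - r ^ n)) ≤ q⁻¹ * (n * u) ^ 2 := by
    calc n * (q⁻¹ * (1 - r ^ n)) ≤ n * (q⁻¹ * (n * u ^ 2)) := by gcongr
      _ = q⁻¹ * (n * u) ^ 2 := by ring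
  rw [abs_of_nonneg (mul_nonneg hq0 hE0)]
  refine le_min (hsq.trans (mul_le_of_le_one_left (sq_nonneg _) hq1)) ?_
  obtain rfl | hn2 := hn.eq_or_lt
  · simp only [Nat.cast_one, one_mul]
    nlinarith
  · calc n * (q⁻¹ * (1 - r ^ n)) ≤ q⁻¹ * (n * u) ^ 2 := hsq
      _ ≤ q⁻¹ * (4 * q) := by gcongr; exact sq_natCast_mul_le_four_mul_one_add_pow hn2 hu
      _ = 4 := by rw [mul_left_comm, inv_mul_cancel₀ (by positivity), mul_one]

lemma min_sq_four_le_four_mul_rpow {x δ : ℝ} (hx : 0 ≤ x) (hδ0 : 0 ≤ δ) (hδ1 : δ ≤ 1) :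
    min (x ^ 2) 4 ≤ 4 * x ^ δ := by
  rcases le_total x 1 with hx1 | hx1
  · calc min (x ^ 2) 4 ≤ x ^ (1 : ℝ) := by
          rw [rpow_one]; exact (min_le_left _ _).trans (by nlinarith)
      _ ≤ x ^ δ := rpow_le_rpow_of_exponent_ge' hx hx1 hδ0 hδ1
      _ ≤ 4 * x ^ δ := by linarith [rpow_nonneg hx δ]
  · linarith [min_le_right (x ^ 2) 4, one_le_rpow hx1 hδ0]

/-- Scalar instance of the uniform Euler-vs-semigroup estimate: for every `δ ∈ [0,1]`
there is a constant `C` such that for every integer `j ≥ 1` and real `u ≥ 0`,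
`|(1+u)^(-j) - e^(-ju)| ≤ C u^δ j^(δ-1)`. -/
theorem stmt7 (δ : ℝ) (hδ : δ ∈ Set.Icc (0 : ℝ) 1) :
    ∃ C : ℝ, ∀ j : ℕ, 1 ≤ j → ∀ u : ℝ, 0 ≤ u →
      |(1 + u) ^ (-(j : ℝ)) - Real.exp (-((j : ℝ) * u))| ≤
        C * u ^ δ * (j : ℝ) ^ (δ - 1) := by
  obtain ⟨hδ0, hδ1⟩ := hδ
  refine ⟨4, fun j hj u hu => ?_⟩
  have hj0 : (0 : ℝ) < j := by exact_mod_cast hj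
  have key : j * |(1 + u) ^ (-(j : ℝ)) - exp (-(j * u))| ≤ 4 * (j ^ δ * u ^ δ) := by
    rw [← mul_rpow hj0.le hu]
    exact (natCast_mul_abs_rpow_neg_natCast_sub_exp_neg_mul_le hj hu).trans
      (min_sq_four_le_four_mul_rpow (by positivity) hδ0 hδ1)
  rw [rpow_sub_one hj0.ne', mul_div_assoc', le_div_iff₀ hj0]
  linarith
end

section
/- For all δ, θ ∈ [0, 1/2) there exists a constant C, depending only on δ and θ, such that for all T > 0, all positive integers n, and all reals 0 ≤ u ≤ t one has ∫_{⌊u⌋}^{t} (t−s)^{−2θ} · (⌈s⌉ − ⌊u⌋)^{−2δ} ds ≤ C · (t + T/n − u)^{1 − 2δ − 2θ}. -/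
/-!
With `h = T/n`, `a = ⌊u⌋` and `b = a - h`, the grid ceiling satisfies
`⌈s⌉ - a ≥ max (h, s - a) ≥ (s - b) / 2`, so the integrand is at most `2 ^ (2δ)` times the
kernel `(t - s) ^ (-2θ) * (s - b) ^ (-2δ)`. One of `t - s`, `s - b` is at least half of
`L = t - b`, hence the kernel is dominated by
`(L / 2) ^ (-2θ) * (s - b) ^ (-2δ) + (L / 2) ^ (-2δ) * (t - s) ^ (-2θ)`,
whose integral is explicitly `O(L ^ (1 - 2δ - 2θ))`. Finally `t + h - u ≤ L ≤ 2 (t + h - u)`.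
-/

open MeasureTheory Set

/-- The paper's `⌊x⌋` for the grid of mesh `h = T / n`. -/
noncomputable def gridFloor (h x : ℝ) : ℝ := h * ⌊x / h⌋

section gridFloor

variable {h : ℝ} (hh : 0 < h)
include hh

theorem gridFloor_le (x : ℝ) : gridFloor h x ≤ x := by
  have := mul_le_mul_of_nonneg_left (Int.floor_le (x / h)) hh.le
  rwa [mul_div_cancel₀ x hh.ne'] at this

theorem lt_gridFloor_add (x : ℝ) : x < gridFloor h x + h := by
  have := mul_lt_mul_of_pos_left (Int.lt_floor_add_one (x / h)) hh
  rwa [mul_div_cancel₀ x hh.ne', mul_add_one] at this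

theorem gridFloor_mono : Monotone (gridFloor h) := fun _ _ hxy =>
  mul_le_mul_of_nonneg_left (Int.cast_le.mpr (Int.floor_mono (by gcongr))) hh.le

theorem gridFloor_gridFloor (x : ℝ) : gridFloor h (gridFloor h x) = gridFloor h x := by
  rw [gridFloor, gridFloor, mul_div_cancel_left₀ _ hh.ne', Int.floor_intCast]

theorem gridFloor_le_gridFloor {u s : ℝ} (hs : gridFloor h u ≤ s) :
    gridFloor h u ≤ gridFloor h s := by
  simpa only [gridFloor_gridFloor hh] using gridFloor_mono hh hs

end gridFloor

theorem gridFloor_div_natCast (T : ℝ) (n : ℕ) (x : ℝ) :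
    gridFloor (T / n) x = T / n * ⌊x * n / T⌋ := by
  rw [gridFloor, div_div_eq_mul_div]

theorem div_two_rpow_neg {x : ℝ} (hx : 0 ≤ x) (α : ℝ) : (x / 2) ^ (-α) = 2 ^ α * x ^ (-α) := by
  rw [Real.div_rpow hx zero_le_two, Real.rpow_neg zero_le_two, div_inv_eq_mul, mul_comm]

theorem rpow_le_two_mul_rpow {w L e : ℝ} (hw : 0 < w) (hwL : w ≤ L) (hL : L ≤ 2 * w) (he : e ≤ 1) :
    L ^ e ≤ 2 * w ^ e := by
  rcases le_or_gt 0 e with he0 | he0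
  · calc L ^ e ≤ (2 * w) ^ e := Real.rpow_le_rpow (hw.le.trans hwL) hL he0
      _ = 2 ^ e * w ^ e := Real.mul_rpow zero_le_two hw.le
      _ ≤ 2 ^ (1 : ℝ) * w ^ e := by gcongr; norm_num
      _ = 2 * w ^ e := by rw [Real.rpow_one]
  · calc L ^ e ≤ w ^ e := Real.rpow_le_rpow_of_nonpos hw hwL he0.le
      _ ≤ 2 * w ^ e := by linarith [Real.rpow_nonneg hw.le e]

theorem rpow_neg_mul_rpow_neg_le {x y α β : ℝ} (hx : 0 ≤ x) (hy : 0 < y) (hα : 0 ≤ α)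
    (hβ : 0 ≤ β) :
    x ^ (-α) * y ^ (-β) ≤
      ((x + y) / 2) ^ (-α) * y ^ (-β) + ((x + y) / 2) ^ (-β) * x ^ (-α) := by
  have hx' := Real.rpow_nonneg hx (-α)
  have hy' := Real.rpow_nonneg hy.le (-β)
  have hm : 0 < (x + y) / 2 := by linarith
  rcases le_total ((x + y) / 2) x with hmx | hmy
  · have := Real.rpow_le_rpow_of_nonpos hm hmx (neg_nonpos.mpr hα)
    nlinarith [Real.rpow_nonneg hm.le (-β)]
  · have := Real.rpow_le_rpow_of_nonpos hm (by linarith : (x + y) / 2 ≤ y) (neg_nonpos.mpr hβ)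
    nlinarith [Real.rpow_nonneg hm.le (-α)]

theorem intervalIntegral.integral_le_of_nonneg_of_le {f g : ℝ → ℝ} {a b : ℝ} (hab : a ≤ b)
    (hg : IntervalIntegrable g volume a b) (hf : ∀ x ∈ Ioc a b, 0 ≤ f x)
    (hfg : ∀ x ∈ Ioc a b, f x ≤ g x) : ∫ x in a..b, f x ≤ ∫ x in a..b, g x := by
  rw [intervalIntegral.integral_of_le hab, intervalIntegral.integral_of_le hab]
  exact integral_mono_of_nonneg (ae_restrict_of_forall_mem measurableSet_Ioc hf) hg.1
    (ae_restrict_of_forall_mem measurableSet_Ioc hfg)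

theorem integral_sub_rpow_neg_le {a b t β : ℝ} (hba : b ≤ a) (hβ : β < 1) :
    ∫ s in a..t, (s - b) ^ (-β) ≤ (t - b) ^ (1 - β) / (1 - β) := by
  rw [intervalIntegral.integral_comp_sub_right (· ^ (-β)), integral_rpow (by left; linarith),
    neg_add_eq_sub]
  gcongr
  linarith [Real.rpow_nonneg (sub_nonneg.mpr hba) (1 - β)]

theorem integral_rsub_rpow_neg_le {a b t α : ℝ} (hba : b ≤ a) (hat : a ≤ t) (hα : α < 1) :
    ∫ s in a..t, (t - s) ^ (-α) ≤ (t - b) ^ (1 - α) / (1 - α) := by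
  rw [intervalIntegral.integral_comp_sub_left (· ^ (-α)), integral_rpow (by left; linarith),
    neg_add_eq_sub, sub_self, Real.zero_rpow (by linarith), sub_zero]
  gcongr

theorem intervalIntegrable_sub_rpow_neg {β : ℝ} (hβ : β < 1) (a t b : ℝ) :
    IntervalIntegrable (fun s => (s - b) ^ (-β)) volume a t := by
  simpa using (intervalIntegral.intervalIntegrable_rpow' (a := a - b) (b := t - b)
    (by linarith : -1 < -β)).comp_sub_right b

theorem intervalIntegrable_rsub_rpow_neg {α : ℝ} (hα : α < 1) (a t : ℝ) :
    IntervalIntegrable (fun s => (t - s) ^ (-α)) volume a t := by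
  simpa using (intervalIntegral.intervalIntegrable_rpow' (a := t - a) (b := t - t)
    (by linarith : -1 < -α)).comp_sub_left t

section kernel

variable {a b t α β s : ℝ}

theorem rpow_kernel_nonneg (hba : b ≤ a) (hs : s ∈ Ioc a t) :
    0 ≤ (t - s) ^ (-α) * (s - b) ^ (-β) :=
  mul_nonneg (Real.rpow_nonneg (sub_nonneg.mpr hs.2) _)
    (Real.rpow_nonneg (by linarith [hs.1]) _)

theorem rpow_kernel_le (hba : b ≤ a) (hs : s ∈ Ioc a t) (hα : 0 ≤ α) (hβ : 0 ≤ β) :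
    (t - s) ^ (-α) * (s - b) ^ (-β) ≤
      ((t - b) / 2) ^ (-α) * (s - b) ^ (-β) + ((t - b) / 2) ^ (-β) * (t - s) ^ (-α) := by
  have := rpow_neg_mul_rpow_neg_le (sub_nonneg.mpr hs.2) (by linarith [hs.1] : 0 < s - b) hα hβ
  rwa [sub_add_sub_cancel] at this

variable (hba : b ≤ a) (hat : a ≤ t) (hα : 0 ≤ α) (hα1 : α < 1) (hβ : 0 ≤ β) (hβ1 : β < 1)
include hba hat hα hα1 hβ hβ1

theorem intervalIntegrable_rpow_kernel :
    IntervalIntegrable (fun s => (t - s) ^ (-α) * (s - b) ^ (-β)) volume a t := by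
  have hmajorant := ((intervalIntegrable_sub_rpow_neg hβ1 a t b).const_mul
    (((t - b) / 2) ^ (-α))).add ((intervalIntegrable_rsub_rpow_neg hα1 a t).const_mul
    (((t - b) / 2) ^ (-β)))
  refine hmajorant.mono_fun' (by fun_prop) ?_
  rw [uIoc_of_le hat]
  refine ae_restrict_of_forall_mem measurableSet_Ioc fun s hs => ?_
  change ‖_‖ ≤ _
  rw [Real.norm_of_nonneg (rpow_kernel_nonneg hba hs)]
  exact rpow_kernel_le hba hs hα hβ

theorem integral_rpow_kernel_le (hbt : b < t) :
    ∫ s in a..t, (t - s) ^ (-α) * (s - b) ^ (-β) ≤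
      (2 ^ α / (1 - β) + 2 ^ β / (1 - α)) * (t - b) ^ (1 - α - β) := by
  have hL : 0 < t - b := sub_pos.mpr hbt
  have hsub := (intervalIntegrable_sub_rpow_neg hβ1 a t b).const_mul (((t - b) / 2) ^ (-α))
  have hrsub := (intervalIntegrable_rsub_rpow_neg hα1 a t).const_mul (((t - b) / 2) ^ (-β))
  have hcoeff {γ : ℝ} : 0 ≤ ((t - b) / 2) ^ (-γ) := Real.rpow_nonneg (by linarith) _
  have hpowα : (t - b) ^ (-α) * (t - b) ^ (1 - β) = (t - b) ^ (1 - α - β) := by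
    rw [← Real.rpow_add hL]; ring_nf
  have hpowβ : (t - b) ^ (-β) * (t - b) ^ (1 - α) = (t - b) ^ (1 - α - β) := by
    rw [← Real.rpow_add hL]; ring_nf
  calc ∫ s in a..t, (t - s) ^ (-α) * (s - b) ^ (-β)
      ≤ ∫ s in a..t, (((t - b) / 2) ^ (-α) * (s - b) ^ (-β) +
          ((t - b) / 2) ^ (-β) * (t - s) ^ (-α)) :=
        intervalIntegral.integral_le_of_nonneg_of_le hat (hsub.add hrsub)
          (fun s hs => rpow_kernel_nonneg hba hs) fun s hs => rpow_kernel_le hba hs hα hβ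
    _ = ((t - b) / 2) ^ (-α) * (∫ s in a..t, (s - b) ^ (-β)) +
          ((t - b) / 2) ^ (-β) * ∫ s in a..t, (t - s) ^ (-α) := by
        simp only [intervalIntegral.integral_add hsub hrsub, intervalIntegral.integral_const_mul]
    _ ≤ ((t - b) / 2) ^ (-α) * ((t - b) ^ (1 - β) / (1 - β)) +
          ((t - b) / 2) ^ (-β) * ((t - b) ^ (1 - α) / (1 - α)) :=
        add_le_add (mul_le_mul_of_nonneg_left (integral_sub_rpow_neg_le hba hβ1) hcoeff)
          (mul_le_mul_of_nonneg_left (integral_rsub_rpow_neg_le hba hat hα1) hcoeff)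
    _ = (2 ^ α / (1 - β) + 2 ^ β / (1 - α)) * (t - b) ^ (1 - α - β) := by
        rw [div_two_rpow_neg hL.le, div_two_rpow_neg hL.le]
        linear_combination 2 ^ α / (1 - β) * hpowα + 2 ^ β / (1 - α) * hpowβ

end kernel

theorem rpow_neg_gridFloor_add_sub_le {h u s β : ℝ} (hh : 0 < h) (hβ : 0 ≤ β)
    (hs : gridFloor h u ≤ s) :
    (gridFloor h s + h - gridFloor h u) ^ (-β) ≤ 2 ^ β * (s - (gridFloor h u - h)) ^ (-β) := by
  have hmono := gridFloor_le_gridFloor hh hs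
  calc (gridFloor h s + h - gridFloor h u) ^ (-β)
      ≤ ((s - (gridFloor h u - h)) / 2) ^ (-β) :=
        Real.rpow_le_rpow_of_nonpos (by linarith) (by linarith [lt_gridFloor_add hh s])
          (neg_nonpos.mpr hβ)
    _ = 2 ^ β * (s - (gridFloor h u - h)) ^ (-β) := div_two_rpow_neg (by linarith) β

theorem integral_rpow_gridFloor_le {h u t α β : ℝ} (hh : 0 < h) (hut : gridFloor h u ≤ t)
    (hα : 0 ≤ α) (hα1 : α < 1) (hβ : 0 ≤ β) (hβ1 : β < 1) :
    ∫ s in gridFloor h u..t, (t - s) ^ (-α) * (gridFloor h s + h - gridFloor h u) ^ (-β) ≤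
      2 ^ β * ∫ s in gridFloor h u..t, (t - s) ^ (-α) * (s - (gridFloor h u - h)) ^ (-β) := by
  rw [← intervalIntegral.integral_const_mul]
  have hkernel := intervalIntegrable_rpow_kernel (b := gridFloor h u - h) (by linarith) hut
    hα hα1 hβ hβ1
  refine intervalIntegral.integral_le_of_nonneg_of_le hut (hkernel.const_mul _)
    (fun s hs => ?_) fun s hs => ?_
  · exact mul_nonneg (Real.rpow_nonneg (sub_nonneg.mpr hs.2) _)
      (Real.rpow_nonneg (by linarith [gridFloor_le_gridFloor hh hs.1.le]) _)
  · rw [mul_left_comm]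
    exact mul_le_mul_of_nonneg_left (rpow_neg_gridFloor_add_sub_le hh hβ hs.1.le)
      (Real.rpow_nonneg (sub_nonneg.mpr hs.2) _)

/-- Lemma A.5 of the paper: for `δ, θ ∈ [0,1/2)` there is a constant `C = C(δ,θ)` such
that for all `T > 0`, positive integers `n`, and `0 ≤ u ≤ t`,
`∫_{⌊u⌋}^t (t-s)^(-2θ) (⌈s⌉ - ⌊u⌋)^(-2δ) ds ≤ C (t + T/n - u)^(1-2δ-2θ)`,
where `⌊x⌋ = (T/n)⌊xn/T⌋` is the largest grid point `≤ x` and `⌈x⌉ = ⌊x⌋ + T/n`. -/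
theorem stmt10 (δ θ : ℝ) (hδ : δ ∈ Set.Ico (0 : ℝ) (1/2)) (hθ : θ ∈ Set.Ico (0 : ℝ) (1/2)) :
    ∃ C : ℝ, ∀ T : ℝ, 0 < T → ∀ n : ℕ, 0 < n → ∀ u t : ℝ, 0 ≤ u → u ≤ t →
      (∫ s in (T / n * (⌊u * n / T⌋ : ℤ) : ℝ)..t,
          (t - s) ^ (-(2 * θ)) *
            ((T / n * (⌊s * n / T⌋ : ℤ) + T / n) - T / n * (⌊u * n / T⌋ : ℤ)) ^ (-(2 * δ))) ≤
        C * (t + T / n - u) ^ (1 - 2 * δ - 2 * θ) := by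
  obtain ⟨hδ0, hδ1⟩ := hδ
  obtain ⟨hθ0, hθ1⟩ := hθ
  set K := 2 ^ (2 * θ) / (1 - 2 * δ) + 2 ^ (2 * δ) / (1 - 2 * θ)
  have hK : 0 ≤ K := add_nonneg (div_nonneg (by positivity) (by linarith))
    (div_nonneg (by positivity) (by linarith))
  refine ⟨2 ^ (2 * δ) * K * 2, fun T hT n hn u t hu hut => ?_⟩
  simp only [← gridFloor_div_natCast]
  set h := T / n
  have hh : 0 < h := by positivity
  have hau : gridFloor h u ≤ u := gridFloor_le hh u
  have hua : u < gridFloor h u + h := lt_gridFloor_add hh u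
  calc _ ≤ 2 ^ (2 * δ) * ∫ s in gridFloor h u..t,
          (t - s) ^ (-(2 * θ)) * (s - (gridFloor h u - h)) ^ (-(2 * δ)) :=
        integral_rpow_gridFloor_le hh (hau.trans hut) (by linarith) (by linarith) (by linarith)
          (by linarith)
    _ ≤ 2 ^ (2 * δ) * (K * (t - (gridFloor h u - h)) ^ (1 - 2 * δ - 2 * θ)) := by
        rw [show 1 - 2 * δ - 2 * θ = 1 - 2 * θ - 2 * δ by ring]
        gcongr
        exact integral_rpow_kernel_le (by linarith) (hau.trans hut) (by linarith) (by linarith)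
          (by linarith) (by linarith) (by linarith)
    _ ≤ 2 ^ (2 * δ) * (K * (2 * (t + h - u) ^ (1 - 2 * δ - 2 * θ))) := by
        gcongr
        exact rpow_le_two_mul_rpow (by linarith) (by linarith) (by linarith) (by linarith)
    _ = 2 ^ (2 * δ) * K * 2 * (t + h - u) ^ (1 - 2 * δ - 2 * θ) := by ring
end

section
/- Let τ ∈ [1, ∞) and α ≥ 0 satisfy ατ < 1, and let 0 < h ≤ t. Then ∫_{−h}^{t−h} | (t−s−h)^{−α} − (t−s)^{−α} · 1_{[0, t−h]}(s) |^τ ds ≤ h^{1−ατ} / (1 − ατ). (This is the key translation estimate, in L^τ, for the weighted kernel s ↦ (t−s)^{−α} used in the Besov-norm bound of Lemma A.3.) -/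
/-!
For `0 ≤ b ≤ a` and `τ ≥ 1`, superadditivity of `x ↦ x ^ τ` gives `(a - b) ^ τ ≤ a ^ τ - b ^ τ`.
Applied to `a = (t - s - h) ^ (-α)` and `b = (t - s) ^ (-α)`, this bounds the integrand off the
endpoint `s = t - h` by `(t - h - s) ^ (-ατ) - 1_{[0, t-h]}(s) (t - s) ^ (-ατ)`, whose integral
telescopes to `h ^ (1 - ατ) / (1 - ατ)`. The integrand need not be shown integrable: it is
nonnegative, so it is dominated in integral by any integrable majorant.
-/

open MeasureTheory intervalIntegral Set

lemma Real.rpow_sub_le_sub_rpow {a b p : ℝ} (hb : 0 ≤ b) (hba : b ≤ a) (hp : 1 ≤ p) :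
    (a - b) ^ p ≤ a ^ p - b ^ p := by
  have := Real.add_rpow_le_rpow_add hb (sub_nonneg.mpr hba) hp
  rw [add_sub_cancel] at this
  linarith

lemma Real.rpow_neg_sub_rpow_neg_rpow_le {x y α τ : ℝ} (hx : 0 < x) (hxy : x ≤ y) (hα : 0 ≤ α)
    (hτ : 1 ≤ τ) : (x ^ (-α) - y ^ (-α)) ^ τ ≤ x ^ (-(α * τ)) - y ^ (-(α * τ)) := by
  have hy := hx.trans_le hxy
  rw [← neg_mul, Real.rpow_mul hx.le, Real.rpow_mul hy.le]
  exact Real.rpow_sub_le_sub_rpow (Real.rpow_nonneg hy.le _)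
    (Real.rpow_le_rpow_of_nonpos hx hxy (neg_nonpos.mpr hα)) hτ

lemma abs_rpow_neg_sub_indicator_rpow_le {α τ h t s : ℝ} (hα : 0 ≤ α) (hτ : 1 ≤ τ) (hh : 0 ≤ h)
    (hs : s < t - h) :
    |(t - s - h) ^ (-α) - indicator (Icc 0 (t - h)) (fun s' => (t - s') ^ (-α)) s| ^ τ ≤
      (t - h - s) ^ (-(α * τ)) -
        indicator (Icc 0 (t - h)) (fun s' => (t - s') ^ (-(α * τ))) s := by
  have hpos : 0 < t - h - s := by linarith
  rw [show t - s - h = t - h - s by ring]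
  by_cases hs0 : s ∈ Icc 0 (t - h)
  · simp only [indicator_of_mem hs0]
    have hle : t - h - s ≤ t - s := by linarith
    rw [abs_of_nonneg (sub_nonneg.mpr
      (Real.rpow_le_rpow_of_nonpos hpos hle (neg_nonpos.mpr hα)))]
    exact Real.rpow_neg_sub_rpow_neg_rpow_le hpos hle hα hτ
  · simp only [indicator_of_notMem hs0, sub_zero]
    rw [abs_of_nonneg (Real.rpow_nonneg hpos.le _), ← Real.rpow_mul hpos.le, neg_mul]

lemma intervalIntegrable_comp_sub_left_rpow {r : ℝ} (hr : -1 < r) (c a b : ℝ) :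
    IntervalIntegrable (fun s => (c - s) ^ r) volume a b := by
  simpa using (intervalIntegrable_rpow' (a := c - a) (b := c - b) hr).comp_sub_left c

lemma integral_comp_sub_left_rpow {r : ℝ} (hr : -1 < r) (c a b : ℝ) :
    ∫ s in a..b, (c - s) ^ r = ((c - a) ^ (r + 1) - (c - b) ^ (r + 1)) / (r + 1) := by
  rw [integral_comp_sub_left (fun x => x ^ r) c, integral_rpow (Or.inl hr)]

lemma IntervalIntegrable.indicator_Icc {f : ℝ → ℝ} {a b c d : ℝ}
    (hf : IntervalIntegrable f volume a b) :
    IntervalIntegrable (indicator (Icc c d) f) volume a b :=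
  intervalIntegrable_iff.mpr <| (intervalIntegrable_iff.mp hf).indicator measurableSet_Icc

lemma intervalIntegral.integral_indicator_Icc {f : ℝ → ℝ} {a b c : ℝ} (hac : a < c) (hcb : c ≤ b) :
    ∫ s in a..b, indicator (Icc c b) f s = ∫ s in c..b, f s := by
  have hset : Ioc a b ∩ Icc c b = Icc c b :=
    inter_eq_right.mpr fun x hx => ⟨hac.trans_le hx.1, hx.2⟩
  rw [integral_of_le (hac.le.trans hcb), setIntegral_indicator measurableSet_Icc, hset,
    integral_Icc_eq_integral_Ioc, ← integral_of_le hcb]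

lemma intervalIntegral.integral_le_of_nonneg_of_le_on_Ioo {f g : ℝ → ℝ} {a b : ℝ} (hab : a ≤ b)
    (hf : ∀ x, 0 ≤ f x) (hg : IntervalIntegrable g volume a b) (hfg : ∀ x ∈ Ioo a b, f x ≤ g x) :
    ∫ x in a..b, f x ≤ ∫ x in a..b, g x := by
  rw [integral_of_le hab, integral_of_le hab, integral_Ioc_eq_integral_Ioo,
    integral_Ioc_eq_integral_Ioo]
  exact integral_mono_of_nonneg (ae_of_all _ hf)
    (hg.def'.mono_set (uIoc_of_le hab ▸ Ioo_subset_Ioc_self))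
    (ae_restrict_of_forall_mem measurableSet_Ioo hfg)

/-- The key `L^τ` translation estimate for the weighted kernel `s ↦ (t-s)^(-α)`
(Lemma A.3 of the paper): for `τ ∈ [1,∞)`, `α ≥ 0` with `ατ < 1`, and `0 < h ≤ t`,
`∫_{-h}^{t-h} |(t-s-h)^(-α) - (t-s)^(-α) 1_{[0,t-h]}(s)|^τ ds ≤ h^(1-ατ)/(1-ατ)`. -/
theorem stmt14 (τ α : ℝ) (hτ : 1 ≤ τ) (hα : 0 ≤ α) (hατ : α * τ < 1)
    (h t : ℝ) (hh : 0 < h) (hht : h ≤ t) :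
    (∫ s in (-h)..(t - h),
        |(t - s - h) ^ (-α) -
            Set.indicator (Set.Icc (0 : ℝ) (t - h)) (fun s' => (t - s') ^ (-α)) s| ^ τ) ≤
      h ^ (1 - α * τ) / (1 - α * τ) := by
  have hr : -1 < -(α * τ) := by linarith
  have hpow (c : ℝ) := intervalIntegrable_comp_sub_left_rpow hr c (-h) (t - h)
  calc _ ≤ ∫ s in (-h)..(t - h), ((t - h - s) ^ (-(α * τ)) -
          indicator (Icc 0 (t - h)) (fun s' => (t - s') ^ (-(α * τ))) s) :=
        integral_le_of_nonneg_of_le_on_Ioo (by linarith) (fun _ => by positivity)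
          ((hpow _).sub (hpow t).indicator_Icc)
          fun s hs => abs_rpow_neg_sub_indicator_rpow_le hα hτ hh.le hs.2
    _ = ((t - h - -h) ^ (-(α * τ) + 1) - (t - h - (t - h)) ^ (-(α * τ) + 1)) / (-(α * τ) + 1) -
          ((t - 0) ^ (-(α * τ) + 1) - (t - (t - h)) ^ (-(α * τ) + 1)) / (-(α * τ) + 1) := by
      rw [integral_sub (hpow _) (hpow t).indicator_Icc, integral_indicator_Icc (by linarith)
        (by linarith), integral_comp_sub_left_rpow hr, integral_comp_sub_left_rpow hr]
    _ = h ^ (1 - α * τ) / (1 - α * τ) := by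
      rw [neg_add_eq_sub, sub_self, Real.zero_rpow (by linarith)]
      ring_nf
end
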